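/- Matching an unmatched pair increases similarity (Theorem 1, third condition, made precise): let m, n, l satisfy l < m and l < n, let 0 ≤ λ_k ≤ 1 for all k < l, ξ_k > 0 for all k < m, η_k > 0 for all k < n, and let 0 ≤ μ ≤ 1. Define λ⁺ : Fin (l+1) → ℝ by λ⁺_k = λ_k for k < l and λ⁺_l = μ (the previously unmatched words with index l now form a similar visual word pair with similarity μ). Then F(m, n, l+1, λ⁺, ξ, η) ≥ F(m, n, l, λ, ξ, η): increasing the number of similar visual word pairs does not decrease the similarity. -/

import Mathlib

open Finset

/-- Extend a weight vector on `Fin m` to `ℕ`, zero outside. -/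
noncomputable def extW {m : ℕ} (ξ : Fin m → ℝ) (k : ℕ) : ℝ :=
  if h : k < m then ξ ⟨k, h⟩ else 0

/-- The image similarity measurement of Zhang et al. (Eq. 2). -/
noncomputable def F (m n l : ℕ) (lam : Fin l → ℝ) (ξ : Fin m → ℝ) (η : Fin n → ℝ) : ℝ :=
  (∑ k : Fin l, lam k * extW ξ k * extW η k) /
    (Real.sqrt ((∑ k : Fin m, ξ k) * (∑ k : Fin n, η k)) *
      Real.sqrt ((∑ k : Fin l, (lam k) ^ 2 * extW ξ k * extW η k) +
        (∑ k ∈ Finset.Ico l m, extW ξ k) * (∑ k ∈ Finset.Ico l n, extW η k)))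

/-!
Matching the words with index `l` moves the term `x y` (with `x = ξ_l`, `y = η_l`) of the
unmatched product `(x + P)(y + Q)`, where `P`, `Q` are the weights of the words beyond `l`, into the matched part as `μ² x y ≤ x y`, and drops the cross
terms `x Q + P y ≥ 0`; so the second square root can only shrink, while the numerator grows by
`μ x y ≥ 0`. The only subtlety is Lean's `a / 0 = 0`: if the new second square root vanishes,
then so does the old numerator, because `λ_k² ξ_k η_k = 0` forces `λ_k ξ_k η_k = 0`.
-/

section extW

variable {m : ℕ} (ξ : Fin m → ℝ)

lemma extW_of_lt {k : ℕ} (hk : k < m) : extW ξ k = ξ ⟨k, hk⟩ := dif_pos hk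

variable {ξ} in
lemma extW_nonneg (hξ : ∀ k, 0 ≤ ξ k) (k : ℕ) : 0 ≤ extW ξ k := by
  unfold extW
  split
  · exact hξ _
  · exact le_rfl

lemma sum_Ico_extW_eq_add {l : ℕ} (hlm : l < m) :
    ∑ k ∈ Ico l m, extW ξ k = ξ ⟨l, hlm⟩ + ∑ k ∈ Ico (l + 1) m, extW ξ k := by
  rw [sum_eq_sum_Ico_succ_bot hlm, extW_of_lt]

end extW

lemma F_eq_div_div (m n l : ℕ) (lam : Fin l → ℝ) (ξ : Fin m → ℝ) (η : Fin n → ℝ) :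
    F m n l lam ξ η =
      (∑ k : Fin l, lam k * extW ξ k * extW η k) /
        √((∑ k : Fin l, lam k ^ 2 * extW ξ k * extW η k) +
          (∑ k ∈ Ico l m, extW ξ k) * (∑ k ∈ Ico l n, extW η k)) /
        √((∑ k : Fin m, ξ k) * (∑ k : Fin n, η k)) := by
  rw [F, mul_comm, div_div]

lemma sum_mul_mul_eq_zero_of_sum_sq_mul_mul_eq_zero {ι : Type*} {s : Finset ι} {c u v : ι → ℝ}
    (hu : ∀ i ∈ s, 0 ≤ u i) (hv : ∀ i ∈ s, 0 ≤ v i)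
    (h : ∑ i ∈ s, c i ^ 2 * u i * v i = 0) : ∑ i ∈ s, c i * u i * v i = 0 := by
  have hterm := (sum_eq_zero_iff_of_nonneg fun i hi =>
    mul_nonneg (mul_nonneg (sq_nonneg (c i)) (hu i hi)) (hv i hi)).mp h
  refine sum_eq_zero fun i hi => pow_eq_zero_iff two_ne_zero |>.mp ?_
  calc (c i * u i * v i) ^ 2 = (c i ^ 2 * u i * v i) * (u i * v i) := by ring
    _ = 0 := by rw [hterm i hi, zero_mul]

lemma div_sqrt_le_div_sqrt {a a' b b' : ℝ} (ha : 0 ≤ a) (haa' : a ≤ a') (hb' : 0 ≤ b')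
    (hbb' : b' ≤ b) (hzero : b' = 0 → a = 0) : a / √b ≤ a' / √b' := by
  rcases hb'.eq_or_lt with h | h
  · simp [← h, hzero h.symm]
  · exact div_le_div₀ (ha.trans haa') haa' (Real.sqrt_pos.2 h) (Real.sqrt_le_sqrt hbb')

lemma div_sqrt_le_div_sqrt_of_match {S T x y P Q μ : ℝ} (hS : 0 ≤ S) (hT : 0 ≤ T)
    (hx : 0 ≤ x) (hy : 0 ≤ y) (hP : 0 ≤ P) (hQ : 0 ≤ Q) (hμ0 : 0 ≤ μ) (hμ1 : μ ≤ 1)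
    (hTS : T = 0 → S = 0) :
    S / √(T + (x + P) * (y + Q)) ≤ (S + μ * x * y) / √(T + μ ^ 2 * x * y + P * Q) := by
  have hxy : 0 ≤ x * y := mul_nonneg hx hy
  have hμ2 : μ ^ 2 ≤ 1 := pow_le_one₀ hμ0 hμ1
  refine div_sqrt_le_div_sqrt hS ?_ (by positivity) ?_ fun h0 => hTS ?_
  · nlinarith [mul_nonneg hμ0 hxy]
  · nlinarith [mul_nonneg (sub_nonneg.2 hμ2) hxy, mul_nonneg hx hQ, mul_nonneg hP hy]
  · nlinarith [mul_nonneg (sq_nonneg μ) hxy, mul_nonneg hP hQ]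

theorem F_mono_add_pair_general (m n l : ℕ) (hlm : l < m) (hln : l < n)
    (lam : Fin l → ℝ) (ξ : Fin m → ℝ) (η : Fin n → ℝ)
    (hlam0 : ∀ k, 0 ≤ lam k)
    (hξ : ∀ k, 0 < ξ k) (hη : ∀ k, 0 < η k)
    (μ : ℝ) (hμ0 : 0 ≤ μ) (hμ1 : μ ≤ 1)
    (lamp : Fin (l + 1) → ℝ)
    (hlamp : ∀ k : Fin l, lamp k.castSucc = lam k) (hlampl : lamp (Fin.last l) = μ) :
    F m n l lam ξ η ≤ F m n (l + 1) lamp ξ η := by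
  have hξ0 := extW_nonneg fun k => (hξ k).le
  have hη0 := extW_nonneg fun k => (hη k).le
  rw [F_eq_div_div, F_eq_div_div, Fin.sum_univ_castSucc, Fin.sum_univ_castSucc,
    sum_Ico_extW_eq_add ξ hlm, sum_Ico_extW_eq_add η hln]
  simp only [Fin.val_castSucc, Fin.val_last, hlamp, hlampl, extW_of_lt _ hlm, extW_of_lt _ hln]
  refine div_le_div_of_nonneg_right ?_ (Real.sqrt_nonneg _)
  exact div_sqrt_le_div_sqrt_of_match
    (sum_nonneg fun k _ => mul_nonneg (mul_nonneg (hlam0 k) (hξ0 k)) (hη0 k))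
    (sum_nonneg fun k _ => mul_nonneg (mul_nonneg (sq_nonneg _) (hξ0 k)) (hη0 k))
    (hξ _).le (hη _).le (sum_nonneg fun k _ => hξ0 k) (sum_nonneg fun k _ => hη0 k) hμ0 hμ1
    (sum_mul_mul_eq_zero_of_sum_sq_mul_mul_eq_zero (fun k _ => hξ0 k) (fun k _ => hη0 k))

theorem F_mono_add_pair (m n l : ℕ) (hlm : l < m) (hln : l < n)
    (lam : Fin l → ℝ) (ξ : Fin m → ℝ) (η : Fin n → ℝ)
    (hlam0 : ∀ k, 0 ≤ lam k) (hlam1 : ∀ k, lam k ≤ 1)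
    (hξ : ∀ k, 0 < ξ k) (hη : ∀ k, 0 < η k)
    (μ : ℝ) (hμ0 : 0 ≤ μ) (hμ1 : μ ≤ 1)
    (lamp : Fin (l + 1) → ℝ)
    (hlamp : ∀ k : Fin l, lamp k.castSucc = lam k) (hlampl : lamp (Fin.last l) = μ) :
    F m n l lam ξ η ≤ F m n (l + 1) lamp ξ η :=
  F_mono_add_pair_general m n l hlm hln lam ξ η hlam0 hξ hη μ hμ0 hμ1 lamp hlamp hlampl
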